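/- arXiv:1705.07470 — 7 statements merged into one kernel-verified Lean document; each statement's English description precedes it below -/
import Mathlib

section
/- Let G be a finitely generated group and J ≤ G a subgroup. Then there exists a group homomorphism χ : G → ℝ whose kernel is exactly the radical √(J[G,G]) = {g ∈ G | ∃ q ≠ 0, g^q ∈ J[G,G]}. -/
/-!
Since `J[G,G]` contains the commutator subgroup, it is normal with finitely generated abelian
quotient `Q`, and the radical `√(J[G,G])` is the preimage of the torsion subgroup of `Q`.
Modulo its torsion, `Q` is free abelian of finite rank, and it embeds into `ℝ` because `ℝ` has
infinite rank over `ℚ`: send a basis to `ℚ`-linearly independent reals.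
-/

theorem AddCommGroup.exists_injective_addMonoidHom_real (M : Type*) [AddCommGroup M]
    [AddGroup.FG M] [IsAddTorsionFree M] : ∃ f : M →+ ℝ, Function.Injective f := by
  have : Module.Finite ℤ M := Module.Finite.iff_addGroup_fg.mpr inferInstance
  let b := Module.finBasis ℤ M
  obtain ⟨v, hv⟩ : ∃ v : Fin (Module.finrank ℤ M) → ℝ, LinearIndependent ℚ v :=
    Module.le_rank_iff.mp (Real.rank_rat_real ▸ (Cardinal.nat_lt_continuum _).le)
  have hv' : Function.Injective (Finsupp.linearCombination ℤ v) := hv.restrict_scalars' ℤ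
  exact ⟨((Finsupp.linearCombination ℤ v).comp b.repr.toLinearMap).toAddMonoidHom,
    hv'.comp b.repr.injective⟩

theorem CommGroup.exists_monoidHom_multiplicative_real_ker_eq_torsion (Q : Type*) [CommGroup Q]
    [Group.FG Q] : ∃ χ : Q →* Multiplicative ℝ, χ.ker = CommGroup.torsion Q := by
  obtain ⟨f, hf⟩ :=
    AddCommGroup.exists_injective_addMonoidHom_real (Additive (Q ⧸ CommGroup.torsion Q))
  refine ⟨(AddMonoidHom.toMultiplicativeRight f).comp (QuotientGroup.mk' _), ?_⟩
  rw [← MonoidHom.comap_ker, (MonoidHom.ker_eq_bot_iff _).mpr hf, MonoidHom.comap_bot,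
    QuotientGroup.ker_mk']

open scoped IsMulCommutative in
theorem exists_monoidHom_multiplicative_real_eq_one_iff_zpow_mem {G : Type*} [Group G]
    [Group.FG G] {N : Subgroup G} (hN : commutator G ≤ N) :
    ∃ χ : G →* Multiplicative ℝ, ∀ g : G, χ g = 1 ↔ ∃ q : ℤ, q ≠ 0 ∧ g ^ q ∈ N := by
  have := Subgroup.Normal.of_commutator_le G hN
  have : IsMulCommutative (G ⧸ N) := Subgroup.Normal.quotient_commutative_iff_commutator_le.mpr hN
  obtain ⟨χ, hχ⟩ := CommGroup.exists_monoidHom_multiplicative_real_ker_eq_torsion (G ⧸ N)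
  refine ⟨χ.comp (QuotientGroup.mk' N), fun g => ?_⟩
  rw [← MonoidHom.mem_ker, ← MonoidHom.comap_ker, Subgroup.mem_comap, hχ, CommGroup.mem_torsion,
    isOfFinOrder_iff_zpow_eq_one]
  simp [← QuotientGroup.mk_zpow, QuotientGroup.eq_one_iff]

/-- If `G` is a finitely generated group and `J ≤ G`, then there is a character
`χ : G → ℝ` (a homomorphism to the additive reals, written multiplicatively) whose kernel
is exactly the radical `√(J[G,G]) = {g | ∃ q ≠ 0, g^q ∈ J[G,G]}`. -/
theorem stmt_2 {G : Type*} [Group G] [Group.FG G] (J : Subgroup G) :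
    ∃ χ : G →* Multiplicative ℝ,
      ∀ g : G, χ g = 1 ↔ ∃ q : ℤ, q ≠ 0 ∧ g ^ q ∈ J ⊔ commutator G :=
  exists_monoidHom_multiplicative_real_eq_one_iff_zpow_mem le_sup_right
end

section
/- Let G be a finitely generated group with a finite generating set S such that the images of the elements of S in the real vector space V = (G/[G,G]) ⊗ ℝ form a basis of V. If J ≤ G is a subgroup generated by k elements, then at most k elements of S lie in the radical √(J[G,G]). -/
open TensorProduct

/-- The natural map `G → (G/[G,G]) ⊗ ℝ`. -/
noncomputable def euclideanization (G : Type*) [Group G] :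
    G → ℝ ⊗[ℤ] (Additive (Abelianization G)) :=
  fun g => (1 : ℝ) ⊗ₜ[ℤ] Additive.ofMul (Abelianization.of g)

/-! The image `φ` of `G` in `V` is a homomorphism killing commutators, so `φ(J[G,G])` lies in
the span `W` of the images of the `k` generators of `J`, and `dim W ≤ k`. As `V` is a real
vector space, `φ(s^q) = q • φ(s) ∈ W` with `q ≠ 0` forces `φ(s) ∈ W`; and at most `dim W` of the
linearly independent vectors `φ(s)`, `s ∈ S`, can lie in `W`. -/

open Module Finset

theorem LinearIndependent.card_filter_mem_le_finrank {K M ι : Type*} [DivisionRing K]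
    [AddCommGroup M] [Module K M] {S : Finset ι} {v : ι → M}
    (hv : LinearIndependent K (fun s : S => v s)) (W : Submodule K M) [FiniteDimensional K W]
    [DecidablePred (· ∈ W)] : #{s ∈ S | v s ∈ W} ≤ finrank K W := by
  set A := S.filter (v · ∈ W)
  have hA : LinearIndependent K (fun a : A => (⟨v a, (mem_filter.mp a.2).2⟩ : W)) :=
    .of_comp W.subtype <| hv.comp (fun a : A => ⟨a, (mem_filter.mp a.2).1⟩)
      fun a b h => Subtype.ext (congrArg Subtype.val h :)
  simpa using hA.fintype_card_le_finrank

open scoped commutatorElement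

namespace euclideanization

variable {G : Type*} [Group G]

@[simp] theorem one : euclideanization G 1 = 0 := by simp [euclideanization]

theorem mul (a b : G) :
    euclideanization G (a * b) = euclideanization G a + euclideanization G b := by
  simp [euclideanization, tmul_add]

theorem inv (a : G) : euclideanization G a⁻¹ = -euclideanization G a := by
  simp [euclideanization, tmul_neg]

theorem zpow (a : G) (q : ℤ) : euclideanization G (a ^ q) = q • euclideanization G a := by
  simp [euclideanization, tmul_smul]

theorem commutatorElement (a b : G) : euclideanization G ⁅a, b⁆ = 0 := by
  simp only [commutatorElement_def, mul, inv]
  abel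

def preimage (W : Submodule ℝ (ℝ ⊗[ℤ] Additive (Abelianization G))) : Subgroup G where
  carrier := {g | euclideanization G g ∈ W}
  one_mem' := by simp
  mul_mem' ha hb := by simpa only [Set.mem_ofPred_eq, mul] using W.add_mem ha hb
  inv_mem' ha := by simpa only [Set.mem_ofPred_eq, inv] using W.neg_mem ha

theorem mem_preimage {W : Submodule ℝ (ℝ ⊗[ℤ] Additive (Abelianization G))} {g : G} :
    g ∈ preimage W ↔ euclideanization G g ∈ W := Iff.rfl

theorem closure_sup_commutator_le_preimage_span (T : Set G) :
    Subgroup.closure T ⊔ commutator G ≤ preimage (Submodule.span ℝ (euclideanization G '' T)) := by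
  rw [commutator_eq_closure, ← Subgroup.closure_union, Subgroup.closure_le]
  rintro g (hg | ⟨a, b, rfl⟩)
  · exact Submodule.subset_span ⟨g, hg, rfl⟩
  · simp [mem_preimage, commutatorElement]

theorem mem_of_zpow_mem_preimage {W : Submodule ℝ (ℝ ⊗[ℤ] Additive (Abelianization G))}
    {g : G} {q : ℤ} (hq : q ≠ 0) (h : g ^ q ∈ preimage W) : euclideanization G g ∈ W := by
  rw [mem_preimage, zpow, ← Int.cast_smul_eq_zsmul ℝ] at h
  exact (W.smul_mem_iff (Int.cast_ne_zero.mpr hq)).mp h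

end euclideanization

theorem stmt_4_general {G : Type*} [Group G] (S : Finset G)
    (hli : LinearIndependent ℝ (fun s : S => euclideanization G s))
    (J : Subgroup G) (k : ℕ) (T : Finset G) (hT : Subgroup.closure (T : Set G) = J)
    (hk : T.card = k) :
    {s : G | s ∈ S ∧ ∃ q : ℤ, q ≠ 0 ∧ s ^ q ∈ J ⊔ commutator G}.ncard ≤ k := by
  classical
  have hrank : finrank ℝ (Submodule.span ℝ (euclideanization G '' (T : Set G))) ≤ k := by
    rw [← coe_image]
    exact (finrank_span_finset_le_card _).trans (hk ▸ card_image_le)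
  set W := Submodule.span ℝ (euclideanization G '' (T : Set G))
  have hradical : {s : G | s ∈ S ∧ ∃ q : ℤ, q ≠ 0 ∧ s ^ q ∈ J ⊔ commutator G} ⊆
      ↑(S.filter (euclideanization G · ∈ W)) := by
    rintro s ⟨hs, q, hq, hmem⟩
    rw [← hT] at hmem
    exact mem_filter.mpr ⟨hs, euclideanization.mem_of_zpow_mem_preimage hq
      (euclideanization.closure_sup_commutator_le_preimage_span _ hmem)⟩
  have : FiniteDimensional ℝ W := .span_of_finite ℝ (T.finite_toSet.image _)
  calc _ ≤ #(S.filter (euclideanization G · ∈ W)) := by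
        simpa only [Set.ncard_coe_finset] using Set.ncard_le_ncard hradical
    _ ≤ finrank ℝ W := hli.card_filter_mem_le_finrank W
    _ ≤ k := hrank

/-- If `G` has a finite generating set `S` whose image in `V = (G/[G,G]) ⊗ ℝ` is a basis
of `V`, and `J ≤ G` is a subgroup generated by `k` elements, then at most `k` elements of
`S` lie in the radical `√(J[G,G])`. -/
theorem stmt_4 {G : Type*} [Group G] (S : Finset G)
    (hgen : Subgroup.closure (S : Set G) = ⊤)
    (hli : LinearIndependent ℝ (fun s : S => euclideanization G s))
    (hspan : Submodule.span ℝ (euclideanization G '' (S : Set G)) = ⊤)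
    (J : Subgroup G) (k : ℕ) (T : Finset G) (hT : Subgroup.closure (T : Set G) = J)
    (hk : T.card = k) :
    {s : G | s ∈ S ∧ ∃ q : ℤ, q ≠ 0 ∧ s ^ q ∈ J ⊔ commutator G}.ncard ≤ k :=
  stmt_4_general S hli J k T hT hk
end

section
/- In the free group F₂ on generators v and w, if q and r are nonzero integers and c, d lie in the commutator subgroup [F₂,F₂], then the elements v^q c and w^r d do not commute. -/
/-!
Send `F₂` to the metabelian group `ℤ[t, t⁻¹] ⋊ ℤ` (that is, `ℤ ≀ ℤ`) by `v ↦ (1, 0)` and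
`w ↦ (0, 1)`. A commutator `c` has trivial `ℤ`-part, so `v ^ q c ↦ (q + γ, 0)`, and the augmentation
`t ↦ 1`, being a homomorphism to an abelian group, kills `γ`. An element `(a, 0)` commutes with an
element whose `ℤ`-part is `r` only if `t ^ r a = a`, which for `r ≠ 0` forces `a = 0` since
`ℤ[t, t⁻¹]` is a domain. Hence `q + γ = 0`, and augmenting gives `q = 0`.
-/

open Multiplicative SemidirectProduct LaurentPolynomial

section TwistedAffine

variable {R G : Type*} [Ring R] [Group G] (χ : G →* Rˣ)

def unitsSMulAut : G →* MulAut (Multiplicative R) where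
  toFun g := AddEquiv.toMultiplicative (DistribMulAction.toAddAut Rˣ R (χ g))
  map_one' := by ext; simp
  map_mul' g h := by ext; simp [mul_smul]

@[simp] lemma unitsSMulAut_apply (g : G) (a : Multiplicative R) :
    unitsSMulAut χ g a = ofAdd (χ g • a.toAdd) := rfl

abbrev TwistedAffine := Multiplicative R ⋊[unitsSMulAut χ] G

variable {χ}

lemma commute_inl_iff (a : R) (x : TwistedAffine χ) :
    Commute (inl (ofAdd a)) x ↔ χ x.right • a = a := by
  rw [Commute, SemiconjBy, SemidirectProduct.ext_iff]
  simp only [mul_left, mul_right, left_inl, right_inl, map_one, one_mul, mul_one,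
    unitsSMulAut_apply, MulAut.one_apply, and_true]
  rw [← toAdd.apply_eq_iff_eq]
  simp only [toAdd_mul, toAdd_ofAdd, add_comm a, add_right_inj, eq_comm]

lemma eq_zero_of_commute_inl [NoZeroDivisors R] {a : R} {x : TwistedAffine χ}
    (h : Commute (inl (ofAdd a)) x) (hx : χ x.right ≠ 1) : a = 0 := by
  have hfix : ((χ x.right : R) - 1) * a = 0 := by
    rw [sub_mul, one_mul, sub_eq_zero]
    exact (commute_inl_iff a x).mp h
  exact (mul_eq_zero.mp hfix).resolve_left (sub_ne_zero.mpr (Units.val_eq_one.not.mpr hx))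

lemma right_eq_one_of_mem_commutator {H N K : Type*} [Group H] [Group N] [CommGroup K]
    {φ : K →* MulAut N} (ψ : H →* N ⋊[φ] K) {c : H} (hc : c ∈ commutator H) :
    (ψ c).right = 1 :=
  Abelianization.commutator_subset_ker (rightHom.comp ψ) hc

variable {S : Type*} [Ring S] (ε : R →+* S)

def augmentation (hε : ∀ g, ε (χ g) = 1) : TwistedAffine χ →* Multiplicative S :=
  lift (AddMonoidHom.toMultiplicative ε.toAddMonoidHom) 1 fun g => by
    ext a
    simp [Units.smul_def, hε]

@[simp] lemma augmentation_apply (hε : ∀ g, ε (χ g) = 1) (x : TwistedAffine χ) :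
    augmentation ε hε x = ofAdd (ε x.left.toAdd) := by
  simp [augmentation, lift]

lemma augmentation_left_eq_zero_of_mem_commutator (hε : ∀ g, ε (χ g) = 1) {H : Type*} [Group H]
    (ψ : H →* TwistedAffine χ) {c : H} (hc : c ∈ commutator H) :
    ε (ψ c).left.toAdd = 0 := by
  simpa using Abelianization.commutator_subset_ker ((augmentation ε hε).comp ψ) hc

end TwistedAffine

namespace LaurentPolynomial

variable (R : Type*) [Semiring R]

noncomputable def unitsT : Multiplicative ℤ →* R[T;T⁻¹]ˣ := (AddMonoidAlgebra.of R ℤ).toHomUnits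

@[simp] lemma val_unitsT (n : Multiplicative ℤ) : (unitsT R n : R[T;T⁻¹]) = T n.toAdd := rfl

variable {R}

lemma T_ne_one [Nontrivial R] {n : ℤ} (hn : n ≠ 0) : (T n : R[T;T⁻¹]) ≠ 1 := by
  intro h
  have := congrArg (·.coeff n) h
  simp [← T_zero, Ne.symm hn] at this

end LaurentPolynomial

noncomputable def freeGroupToTwistedAffine : FreeGroup (Fin 2) →* TwistedAffine (unitsT ℤ) :=
  FreeGroup.lift ![inl (ofAdd 1), inr (ofAdd 1)]

@[simp] lemma freeGroupToTwistedAffine_of_zero :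
    freeGroupToTwistedAffine (FreeGroup.of 0) = inl (ofAdd 1) := by
  simp [freeGroupToTwistedAffine]

@[simp] lemma freeGroupToTwistedAffine_of_one :
    freeGroupToTwistedAffine (FreeGroup.of 1) = inr (ofAdd 1) := by
  simp [freeGroupToTwistedAffine]

/-- In the free group `F₂` on generators `v = of 0`, `w = of 1`: if `q, r` are nonzero
integers and `c, d` lie in the commutator subgroup, then `v^q c` and `w^r d` do not
commute. -/
theorem stmt_6 (q r : ℤ) (hq : q ≠ 0) (hr : r ≠ 0)
    (c d : FreeGroup (Fin 2)) (hc : c ∈ commutator (FreeGroup (Fin 2)))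
    (hd : d ∈ commutator (FreeGroup (Fin 2))) :
    ¬ Commute (FreeGroup.of (0 : Fin 2) ^ q * c) (FreeGroup.of (1 : Fin 2) ^ r * d) := by
  intro hcom
  set ψ := freeGroupToTwistedAffine
  set γ := (ψ c).left.toAdd
  have hv : ψ (FreeGroup.of 0 ^ q * c) = inl (ofAdd (q + γ)) := by
    rw [map_mul, map_zpow, ← inl_left_mul_inr_right (ψ c), right_eq_one_of_mem_commutator ψ hc]
    simp [ψ, ← map_zpow, ← ofAdd_zsmul, γ]
  have hw : (ψ (FreeGroup.of 1 ^ r * d)).right = ofAdd r := by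
    rw [map_mul, mul_right, right_eq_one_of_mem_commutator ψ hd, mul_one, map_zpow]
    simp [ψ, ← map_zpow, ← ofAdd_zsmul]
  have hsum : (q : ℤ[T;T⁻¹]) + γ = 0 := by
    refine eq_zero_of_commute_inl (hv ▸ hcom.map ψ) ?_
    rw [hw, Ne, ← Units.val_eq_one, val_unitsT, toAdd_ofAdd]
    exact T_ne_one hr
  have hε : ∀ n, eval₂ (RingHom.id ℤ) 1 (unitsT ℤ n) = 1 := by simp
  have hγ : eval₂ (RingHom.id ℤ) 1 γ = 0 := augmentation_left_eq_zero_of_mem_commutator _ hε ψ hc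
  simpa [hγ, hq] using congrArg (eval₂ (RingHom.id ℤ) 1) hsum
end

section
/- Let G = F₂ × ℤ where F₂ is free on generators x, y. If q, r are nonzero integers and c, d ∈ [G,G], then the elements (x,0)^q · c and (y,0)^r · d generate a non-abelian free subgroup of G. -/
/-!
Since `[F₂ × ℤ, F₂ × ℤ] = [F₂, F₂] × 1`, it suffices to show that `a = x^q c` and `b = y^r d`, now
with `c, d ∈ [F₂, F₂]`, freely generate a subgroup of `F₂`. They do not commute: under
`x ↦ (1,0,0)`, `y ↦ (0,1,0)` into the integer Heisenberg group, `[F₂, F₂]` maps into the centre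
and the commutator of the images of `a` and `b` is the central element `q r ≠ 0`. By
Nielsen–Schreier `H = ⟨a, b⟩` is free, and being non-abelian it has two distinct basis elements;
sending them to `x, y` and the rest of the basis to `1` makes `F₂ → H → F₂` surjective. Free groups
are residually finite (Sanov's ping-pong embedding into `GL₂(ℤ)`, which is residually finite by
reduction mod `m`), and finitely generated residually finite groups are Hopfian, so this
endomorphism, hence `F₂ → H`, is injective.
-/

open Pointwise
open scoped Function

namespace Group

variable {G H : Type*} [Group G] [Group H]

theorem ResiduallyFinite.of_injective [ResiduallyFinite H] {f : G →* H}
    (hf : Function.Injective f) : ResiduallyFinite G := by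
  refine residuallyFinite_of_forall_exists_finite_monoidHom fun g hg ↦ ?_
  obtain ⟨N, hN⟩ := exists_finiteIndexNormalSubgroup_notMem (f g)
    ((map_ne_one_iff f hf).mpr hg)
  exact ⟨H ⧸ N.toSubgroup, inferInstance, inferInstance, (QuotientGroup.mk' _).comp f,
    by simpa [FiniteIndexNormalSubgroup.mem_toSubgroup_iff] using hN⟩

instance finite_monoidHom [FG G] [Finite H] : Finite (G →* H) := by
  obtain ⟨α, _, π, hπ⟩ := fg_iff_exists_freeGroup_hom_surjective_finite.mp ‹FG G›
  have : Finite (FreeGroup α →* H) := .of_equiv _ FreeGroup.lift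
  exact .of_injective (fun f ↦ f.comp π) fun _ _ ↦ (MonoidHom.cancel_right hπ).mp

end Group

theorem MonoidHom.injective_of_surjective_of_residuallyFinite {G : Type*} [Group G]
    [Group.FG G] [Group.ResiduallyFinite G] {φ : G →* G} (hφ : Function.Surjective φ) :
    Function.Injective φ := by
  refine (injective_iff_map_eq_one φ).mpr fun g hg ↦ ?_
  refine Group.eq_one_iff_forall_finiteIndexNormalSubroup g fun N ↦ ?_
  -- Precomposition with `φ` permutes the finitely many maps to `G ⧸ N`, so the quotient map
  -- itself factors through `φ` and kills `g`.
  have hinj : Function.Injective fun ψ : G →* G ⧸ N.toSubgroup ↦ ψ.comp φ :=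
    fun _ _ ↦ (MonoidHom.cancel_right hφ).mp
  obtain ⟨ψ, hψ⟩ := Finite.injective_iff_surjective.mp hinj (QuotientGroup.mk' _)
  rw [← FiniteIndexNormalSubgroup.mem_toSubgroup_iff, ← QuotientGroup.eq_one_iff,
    ← QuotientGroup.mk'_apply, ← hψ, MonoidHom.comp_apply, hg, map_one]

instance Matrix.GeneralLinearGroup.residuallyFinite_int {n : Type*} [Fintype n] [DecidableEq n] :
    Group.ResiduallyFinite (GL n ℤ) := by
  refine Group.residuallyFinite_of_forall_exists_finite_monoidHom fun g hg ↦ ?_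
  obtain ⟨i, j, hij⟩ : ∃ i j, (g : Matrix n n ℤ) i j - (1 : Matrix n n ℤ) i j ≠ 0 := by
    by_contra! h
    exact hg (Units.ext (Matrix.ext fun i j ↦ sub_eq_zero.mp (h i j)))
  set k := (g : Matrix n n ℤ) i j - (1 : Matrix n n ℤ) i j
  let reduce : GL n ℤ →* GL n (ZMod (k.natAbs + 1)) :=
    Units.map (Int.castRingHom _).mapMatrix.toMonoidHom
  refine ⟨_, inferInstance, inferInstance, reduce, fun h ↦ hij ?_⟩
  have hk : (k : ZMod (k.natAbs + 1)) = 0 := by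
    have := congr_arg (fun u : GL n _ ↦ (u : Matrix n n (ZMod (k.natAbs + 1))) i j) h
    simp only [reduce] at this
    rw [Int.cast_sub, sub_eq_zero]
    simpa [Matrix.one_apply, apply_ite] using this
  refine Int.eq_zero_of_dvd_of_natAbs_lt_natAbs ((ZMod.intCast_zmod_eq_zero_iff_dvd _ _).mp hk) ?_
  rw [Int.natAbs_natCast]
  exact Nat.lt_succ_self _

theorem pairwise_disjoint_on_fin_two {α : Type*} {s t : Set α} (h : Disjoint s t) :
    Pairwise (Disjoint on ![s, t]) := by
  intro i j hij
  fin_cases i <;> fin_cases j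
  exacts [absurd rfl hij, h, h.symm, absurd rfl hij]

namespace Sanov

def upper : GL (Fin 2) ℤ :=
  ⟨!![1, 2; 0, 1], !![1, -2; 0, 1], by simp [Matrix.one_fin_two], by simp [Matrix.one_fin_two]⟩

def lower : GL (Fin 2) ℤ :=
  ⟨!![1, 0; 2, 1], !![1, 0; -2, 1], by simp [Matrix.one_fin_two], by simp [Matrix.one_fin_two]⟩

local notation "V" => {v : Fin 2 → ℤ // v ≠ 0}

def nonnegCone : Set V := {v | 0 ≤ v.1 0 * v.1 1}

def firstDominates : Set V := {v | v.1 1 ^ 2 ≤ v.1 0 ^ 2}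

def secondDominates : Set V := {v | v.1 0 ^ 2 ≤ v.1 1 ^ 2}

/- Swapping coordinates exchanges `upper` and `lower`, but the ping-pong sets cannot be chosen
swap-invariant; here the ties `|v 0| = |v 1|` go to `X 0` and `Y 1`. -/
def X : Fin 2 → Set V := ![nonnegCone ∩ firstDominates, nonnegCone ∩ firstDominatesᶜ]

def Y : Fin 2 → Set V := ![nonnegConeᶜ ∩ secondDominatesᶜ, nonnegConeᶜ ∩ secondDominates]

lemma upper_smul_coe (v : V) : ((upper • v : V) : Fin 2 → ℤ) = ![v.1 0 + 2 * v.1 1, v.1 1] := by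
  ext i; fin_cases i <;> simp [upper, Units.smul_def, Matrix.mulVec, dotProduct, Fin.sum_univ_two]

lemma upper_inv_smul_coe (v : V) :
    ((upper⁻¹ • v : V) : Fin 2 → ℤ) = ![v.1 0 - 2 * v.1 1, v.1 1] := by
  ext i; fin_cases i <;>
    simp [upper, Units.smul_def, Matrix.mulVec, dotProduct, Fin.sum_univ_two, sub_eq_add_neg]

lemma lower_smul_coe (v : V) : ((lower • v : V) : Fin 2 → ℤ) = ![v.1 0, v.1 1 + 2 * v.1 0] := by
  ext i; fin_cases i <;>
    simp [lower, Units.smul_def, Matrix.mulVec, dotProduct, Fin.sum_univ_two, add_comm]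

lemma lower_inv_smul_coe (v : V) :
    ((lower⁻¹ • v : V) : Fin 2 → ℤ) = ![v.1 0, v.1 1 - 2 * v.1 0] := by
  ext i; fin_cases i <;>
    simp [lower, Units.smul_def, Matrix.mulVec, dotProduct, Fin.sum_univ_two, sub_eq_add_neg,
      add_comm]

lemma ne_zero_or_ne_zero (v : V) : v.1 0 ≠ 0 ∨ v.1 1 ≠ 0 := by
  by_contra! h
  exact v.2 (funext fun i ↦ by fin_cases i <;> simp [h.1, h.2])

lemma upper_smul_compl_subset : upper • (Y 0)ᶜ ⊆ X 0 := by
  rintro _ ⟨v, hv, rfl⟩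
  simp only [X, Y, nonnegCone, firstDominates, secondDominates, Matrix.cons_val_zero,
    Set.mem_compl_iff, Set.mem_inter_iff, Set.mem_ofPred_eq, upper_smul_coe, Matrix.cons_val_one,
    not_and_or, not_le] at hv ⊢
  constructor <;> rcases hv with h | h <;> nlinarith [sq_nonneg (v.1 0 + v.1 1), sq_nonneg (v.1 1)]

lemma upper_inv_smul_compl_subset : upper⁻¹ • (X 0)ᶜ ⊆ Y 0 := by
  rintro _ ⟨v, hv, rfl⟩
  simp only [X, Y, nonnegCone, firstDominates, secondDominates, Matrix.cons_val_zero,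
    Set.mem_compl_iff, Set.mem_inter_iff, Set.mem_ofPred_eq, upper_inv_smul_coe,
    Matrix.cons_val_one, not_and_or, not_le] at hv ⊢
  constructor <;> rcases hv with h | h <;>
    nlinarith [sq_nonneg (v.1 0 - v.1 1), sq_nonneg (v.1 1), sq_nonneg (v.1 0 - 3 * v.1 1)]

lemma lower_smul_compl_subset : lower • (Y 1)ᶜ ⊆ X 1 := by
  rintro _ ⟨v, hv, rfl⟩
  simp only [X, Y, nonnegCone, firstDominates, secondDominates, Matrix.cons_val_one,
    Set.mem_compl_iff, Set.mem_inter_iff, Set.mem_ofPred_eq, lower_smul_coe, Matrix.cons_val_zero,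
    not_and_or, not_le, not_lt] at hv ⊢
  constructor <;> rcases hv with h | h <;> rcases ne_zero_or_ne_zero v with h0 | h0 <;>
    nlinarith [sq_nonneg (v.1 0 + v.1 1), sq_nonneg (v.1 1), sq_pos_of_ne_zero h0]

lemma lower_inv_smul_compl_subset : lower⁻¹ • (X 1)ᶜ ⊆ Y 1 := by
  rintro _ ⟨v, hv, rfl⟩
  simp only [X, Y, nonnegCone, firstDominates, secondDominates, Matrix.cons_val_one,
    Set.mem_compl_iff, Set.mem_inter_iff, Set.mem_ofPred_eq, lower_inv_smul_coe,
    Matrix.cons_val_zero, not_and_or, not_le, not_lt] at hv ⊢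
  constructor <;> rcases hv with h | h <;> rcases ne_zero_or_ne_zero v with h0 | h0 <;>
    nlinarith [sq_nonneg (v.1 0 - v.1 1), sq_nonneg (v.1 1), sq_pos_of_ne_zero h0]

theorem injective_lift : Function.Injective (FreeGroup.lift ![upper, lower]) := by
  refine FreeGroup.injective_lift_of_ping_pong _ X Y ?_
    (pairwise_disjoint_on_fin_two
      (disjoint_compl_right.mono Set.inter_subset_right Set.inter_subset_right))
    (pairwise_disjoint_on_fin_two
      (disjoint_compl_left.mono Set.inter_subset_right Set.inter_subset_right))
    (fun i j ↦ Set.disjoint_left.mpr fun v hX hY ↦ by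
      fin_cases i <;> fin_cases j <;> exact hY.1 hX.1)
    (Fin.forall_fin_two.2 ⟨upper_smul_compl_subset, lower_smul_compl_subset⟩)
    (Fin.forall_fin_two.2 ⟨upper_inv_smul_compl_subset, lower_inv_smul_compl_subset⟩)
  refine Fin.forall_fin_two.2 ⟨⟨⟨![1, 0], by simp⟩, ?_⟩, ⟨⟨![0, 1], by simp⟩, ?_⟩⟩ <;>
    simp [X, nonnegCone, firstDominates]

end Sanov

instance FreeGroup.residuallyFinite_fin_two : Group.ResiduallyFinite (FreeGroup (Fin 2)) :=
  .of_injective Sanov.injective_lift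

theorem FreeGroup.commute_of_subsingleton {α : Type*} [Subsingleton α] (u v : FreeGroup α) :
    Commute u v := by
  cases isEmpty_or_nonempty α
  · exact Subsingleton.elim (u * v) (v * u)
  · have : Unique α := uniqueOfSubsingleton (Classical.arbitrary α)
    exact (Commute.all _ _).of_map (f := mulEquivIntOfUnique) (MulEquiv.injective _)

theorem IsFreeGroup.injective_lift_of_not_commute {F : Type*} [Group F] [IsFreeGroup F]
    {a b : F} (hab : ¬Commute a b) : Function.Injective (FreeGroup.lift ![a, b]) := by
  classical
  set g := FreeGroup.lift ![a, b]
  obtain ⟨s, t, hst⟩ : Nontrivial (IsFreeGroup.Generators g.range) := by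
    by_contra! h
    have hcomm := (FreeGroup.commute_of_subsingleton
      (IsFreeGroup.toFreeGroup g.range (g.rangeRestrict (.of 0)))
      (IsFreeGroup.toFreeGroup g.range (g.rangeRestrict (.of 1)))).of_map (MulEquiv.injective _)
    exact hab (by simpa [g] using hcomm.map g.range.subtype)
  let ψ : g.range →* FreeGroup (Fin 2) :=
    IsFreeGroup.lift fun u ↦ if u = s then .of 0 else if u = t then .of 1 else 1
  have hψ_section : ψ.comp (FreeGroup.lift ![IsFreeGroup.of s, IsFreeGroup.of t]) = .id _ :=
    FreeGroup.ext_hom _ _ fun i ↦ by fin_cases i <;> simp [ψ, hst.symm]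
  have hψ_surj : Function.Surjective ψ := fun x ↦ ⟨_, DFunLike.congr_fun hψ_section x⟩
  have hinj : Function.Injective (ψ ∘ g.rangeRestrict) :=
    MonoidHom.injective_of_surjective_of_residuallyFinite (φ := ψ.comp g.rangeRestrict)
      (hψ_surj.comp g.rangeRestrict_surjective)
  exact g.rangeRestrict_injective_iff.mp hinj.of_comp

@[ext]
structure Heisenberg where
  x : ℤ
  y : ℤ
  z : ℤ

namespace Heisenberg

instance : Mul Heisenberg := ⟨fun p q ↦ ⟨p.x + q.x, p.y + q.y, p.z + q.z + p.x * q.y⟩⟩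
instance : One Heisenberg := ⟨⟨0, 0, 0⟩⟩
instance : Inv Heisenberg := ⟨fun p ↦ ⟨-p.x, -p.y, -p.z + p.x * p.y⟩⟩

theorem mul_def (p q : Heisenberg) : p * q = ⟨p.x + q.x, p.y + q.y, p.z + q.z + p.x * q.y⟩ := rfl
theorem one_def : (1 : Heisenberg) = ⟨0, 0, 0⟩ := rfl
theorem inv_def (p : Heisenberg) : p⁻¹ = ⟨-p.x, -p.y, -p.z + p.x * p.y⟩ := rfl

instance : Group Heisenberg where
  mul_assoc p q r := by ext <;> simp only [mul_def] <;> ring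
  one_mul p := by ext <;> simp [mul_def, one_def]
  mul_one p := by ext <;> simp [mul_def, one_def]
  inv_mul_cancel p := by ext <;> simp [mul_def, one_def, inv_def]

theorem commute_iff {p q : Heisenberg} : Commute p q ↔ p.x * q.y = q.x * p.y := by
  rw [Commute, SemiconjBy, mul_def, mul_def, Heisenberg.mk.injEq]
  constructor
  · rintro ⟨-, -, h⟩
    linarith
  · exact fun h ↦ ⟨add_comm _ _, add_comm _ _, by linarith⟩

def xy : Heisenberg →* Multiplicative (ℤ × ℤ) where
  toFun p := .ofAdd (p.x, p.y)
  map_one' := rfl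
  map_mul' _ _ := rfl

end Heisenberg

def FreeGroup.toHeisenberg : FreeGroup (Fin 2) →* Heisenberg :=
  FreeGroup.lift ![⟨1, 0, 0⟩, ⟨0, 1, 0⟩]

theorem FreeGroup.not_commute_zpow_mul_zpow_mul {q r : ℤ} (hq : q ≠ 0) (hr : r ≠ 0)
    {c d : FreeGroup (Fin 2)} (hc : c ∈ commutator _) (hd : d ∈ commutator _) :
    ¬Commute (of 0 ^ q * c) (of 1 ^ r * d) := by
  set π := Heisenberg.xy.comp toHeisenberg
  have hπ : ∀ w ∈ commutator (FreeGroup (Fin 2)), π w = 1 := fun w hw ↦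
    Abelianization.commutator_subset_ker π hw
  have ha : π (of 0 ^ q * c) = .ofAdd (q, 0) := by
    rw [_root_.map_mul, map_zpow, hπ c hc, mul_one]
    simp [π, toHeisenberg, Heisenberg.xy, ← ofAdd_zsmul]
  have hb : π (of 1 ^ r * d) = .ofAdd (0, r) := by
    rw [_root_.map_mul, map_zpow, hπ d hd, mul_one]
    simp [π, toHeisenberg, Heisenberg.xy, ← ofAdd_zsmul]
  obtain ⟨hax, hay⟩ := Prod.mk.inj (Multiplicative.ofAdd.injective ha)
  obtain ⟨hbx, hby⟩ := Prod.mk.inj (Multiplicative.ofAdd.injective hb)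
  intro h
  have := Heisenberg.commute_iff.mp (h.map toHeisenberg)
  rw [hax, hay, hbx, hby, mul_zero] at this
  exact mul_ne_zero hq hr this

theorem mem_commutator_prod_iff {G A : Type*} [Group G] [CommGroup A] {c : G × A} :
    c ∈ commutator (G × A) ↔ c.1 ∈ commutator G ∧ c.2 = 1 := by
  rw [commutator, ← Subgroup.top_prod_top, Subgroup.commutator_prod_prod, ← commutator,
    ← commutator, commutator_eq_bot (G := A), Subgroup.mem_prod, Subgroup.mem_bot]

/-- Let `G = F₂ × ℤ` with `F₂` free on `x = of 0`, `y = of 1`. If `q, r` are nonzero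
integers and `c, d ∈ [G,G]`, then `(x,0)^q ⬝ c` and `(y,0)^r ⬝ d` generate a non-abelian
free subgroup of `G` (i.e. there is an injective homomorphism from the free group of rank
2 sending the two generators to these two elements). -/
theorem stmt_8 (q r : ℤ) (hq : q ≠ 0) (hr : r ≠ 0)
    (c d : FreeGroup (Fin 2) × Multiplicative ℤ)
    (hc : c ∈ commutator (FreeGroup (Fin 2) × Multiplicative ℤ))
    (hd : d ∈ commutator (FreeGroup (Fin 2) × Multiplicative ℤ)) :
    ∃ f : FreeGroup (Fin 2) →* FreeGroup (Fin 2) × Multiplicative ℤ,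
      Function.Injective f ∧
      f (FreeGroup.of 0) = (FreeGroup.of (0 : Fin 2), 1) ^ q * c ∧
      f (FreeGroup.of 1) = (FreeGroup.of (1 : Fin 2), 1) ^ r * d := by
  obtain ⟨hc₁, hc₂⟩ := mem_commutator_prod_iff.mp hc
  obtain ⟨hd₁, hd₂⟩ := mem_commutator_prod_iff.mp hd
  have hinj := IsFreeGroup.injective_lift_of_not_commute
    (FreeGroup.not_commute_zpow_mul_zpow_mul hq hr hc₁ hd₁)
  refine ⟨(MonoidHom.inl _ _).comp (FreeGroup.lift ![_, _]),
    (Prod.mk_left_injective 1).comp hinj, ?_, ?_⟩ <;> ext <;> simp [hc₂, hd₂]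
end

section
/- Let Γ be a finite simplicial graph and A_Γ the associated right-angled Artin group. If v and w are distinct non-adjacent vertices of Γ, q, r are nonzero integers, and c, d ∈ [A_Γ, A_Γ], then v^q c and w^r d do not commute in A_Γ. Consequently, if K is an abelian subgroup of A_Γ, the set of vertices v with v ∈ √(K[A_Γ,A_Γ]) spans a clique in Γ. -/
/-! For non-adjacent vertices `v, w` there is a homomorphism from `A_Γ` to the integer Heisenberg
group sending `v, w` to its standard generators `x, y` and every other vertex to `1`. The Heisenberg
group has central commutator subgroup, so the images of `c` and `d` are central, and `v^q c`, `w^r d`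
commuting would force `x^q` and `y^r` to commute, whereas `x^q y^r` and `y^r x^q` differ by `qr ≠ 0`
in the corner entry. For the consequence, writing `v^q = k c` and
`w^r = k' d` with `k, k' ∈ K` and `c, d` commutators, `k = v^q c⁻¹` and `k' = w^r d⁻¹` commute. -/

/-- The commutation relations defining the right-angled Artin group on a graph `Γ`. -/
def raagRels {V : Type*} (Γ : SimpleGraph V) : Set (FreeGroup V) :=
  {r | ∃ v w : V, Γ.Adj v w ∧
    r = FreeGroup.of v * FreeGroup.of w * (FreeGroup.of v)⁻¹ * (FreeGroup.of w)⁻¹}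

/-- The right-angled Artin group on the graph `Γ`. -/
def RAAG {V : Type*} (Γ : SimpleGraph V) : Type _ := PresentedGroup (raagRels Γ)

instance {V : Type*} (Γ : SimpleGraph V) : Group (RAAG Γ) :=
  inferInstanceAs (Group (PresentedGroup (raagRels Γ)))

/-- The generator of `RAAG Γ` corresponding to the vertex `v`. -/
def RAAG.gen {V : Type*} (Γ : SimpleGraph V) (v : V) : RAAG Γ := PresentedGroup.of v

theorem Commute.of_mul_mem_center {G : Type*} [Group G] {a b c d : G}
    (hc : c ∈ Subgroup.center G) (hd : d ∈ Subgroup.center G) (h : Commute (a * c) (b * d)) :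
    Commute a b := by
  have hc' : Commute c⁻¹ (b * d) := (Subgroup.mem_center_iff.mp (inv_mem hc) (b * d)).symm
  have hd' : Commute a d⁻¹ := Subgroup.mem_center_iff.mp (inv_mem hd) a
  have h' : Commute a (b * d) := by simpa using h.mul_left hc'
  simpa using h'.mul_right hd'

theorem MonoidHom.map_mem_center_of_mem_commutator {G H : Type*} [Group G] [Group H]
    (f : G →* H) (hH : commutator H ≤ Subgroup.center H) {g : G} (hg : g ∈ commutator G) :
    f g ∈ Subgroup.center H := by
  apply hH
  have hmap : f g ∈ (commutator G).map f := Subgroup.mem_map_of_mem f hg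
  rw [commutator_def, Subgroup.map_commutator] at hmap
  exact Subgroup.commutator_mono le_top le_top hmap

/-- `⟨a, b, c⟩` stands for the unitriangular matrix `[[1, a, c], [0, 1, b], [0, 0, 1]]`. -/
@[ext] structure Heisenberg_s10 where
  a : ℤ
  b : ℤ
  c : ℤ

namespace Heisenberg_s10

instance inst_s10 : Mul Heisenberg_s10 := ⟨fun g h => ⟨g.a + h.a, g.b + h.b, g.c + h.c + g.a * h.b⟩⟩
instance inst_s10_2 : One Heisenberg_s10 := ⟨⟨0, 0, 0⟩⟩
instance inst_s10_3 : Inv Heisenberg_s10 := ⟨fun g => ⟨-g.a, -g.b, -g.c + g.a * g.b⟩⟩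

@[simp] lemma mul_a (g h : Heisenberg_s10) : (g * h).a = g.a + h.a := rfl
@[simp] lemma mul_b (g h : Heisenberg_s10) : (g * h).b = g.b + h.b := rfl
@[simp] lemma mul_c (g h : Heisenberg_s10) : (g * h).c = g.c + h.c + g.a * h.b := rfl
@[simp] lemma one_a : (1 : Heisenberg_s10).a = 0 := rfl
@[simp] lemma one_b : (1 : Heisenberg_s10).b = 0 := rfl
@[simp] lemma one_c : (1 : Heisenberg_s10).c = 0 := rfl
@[simp] lemma inv_a (g : Heisenberg_s10) : g⁻¹.a = -g.a := rfl
@[simp] lemma inv_b (g : Heisenberg_s10) : g⁻¹.b = -g.b := rfl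
@[simp] lemma inv_c (g : Heisenberg_s10) : g⁻¹.c = -g.c + g.a * g.b := rfl

instance inst_s10_4 : Group Heisenberg_s10 where
  mul_assoc g h k := by ext <;> simp <;> ring
  one_mul g := by ext <;> simp
  mul_one g := by ext <;> simp
  inv_mul_cancel g := by ext <;> simp

def x : Heisenberg_s10 := ⟨1, 0, 0⟩
def y : Heisenberg_s10 := ⟨0, 1, 0⟩

lemma x_zpow (q : ℤ) : x ^ q = ⟨q, 0, 0⟩ := by
  induction q using Int.induction_on with
  | zero => rfl
  | succ n ih => rw [zpow_add_one, ih]; ext <;> simp [x]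
  | pred n ih => rw [zpow_sub_one, ih]; ext <;> simp [x, sub_eq_add_neg]

lemma y_zpow (r : ℤ) : y ^ r = ⟨0, r, 0⟩ := by
  induction r using Int.induction_on with
  | zero => rfl
  | succ n ih => rw [zpow_add_one, ih]; ext <;> simp [y]
  | pred n ih => rw [zpow_sub_one, ih]; ext <;> simp [y, sub_eq_add_neg]

lemma commutator_le_center : commutator Heisenberg_s10 ≤ Subgroup.center Heisenberg_s10 := by
  rw [commutator_def]
  refine Subgroup.commutator_le.mpr fun g _ h _ => Subgroup.mem_center_iff.mpr fun k => ?_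
  ext <;> simp [commutatorElement_def]; ring

lemma not_commute_x_zpow_y_zpow {q r : ℤ} (hq : q ≠ 0) (hr : r ≠ 0) :
    ¬ Commute (x ^ q) (y ^ r) := by
  intro h
  simpa [x_zpow, y_zpow, hq, hr] using congrArg Heisenberg_s10.c h.eq

end Heisenberg_s10

namespace RAAG

variable {V : Type*} (Γ : SimpleGraph V) {G : Type*} [Group G]

def lift (f : V → G) (hf : ∀ v w, Γ.Adj v w → Commute (f v) (f w)) : RAAG Γ →* G :=
  PresentedGroup.toGroup (rels := raagRels Γ) (f := f) <| by
    rintro _ ⟨v, w, hvw, rfl⟩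
    simpa [← commutatorElement_def, commutatorElement_eq_one_iff_commute] using hf v w hvw

@[simp] lemma lift_gen (f : V → G) (hf : ∀ v w, Γ.Adj v w → Commute (f v) (f w)) (v : V) :
    lift Γ f hf (gen Γ v) = f v :=
  PresentedGroup.toGroup.of _

open scoped Classical in
noncomputable def liftPair {v w : V} (hvw : ¬ Γ.Adj v w) (g h : G) : RAAG Γ →* G :=
  lift Γ (fun u => if u = v then g else if u = w then h else 1) <| by
    intro u u' huu'
    split_ifs <;> subst_vars <;> first
      | exact Commute.one_left _ | exact Commute.one_right _ | exact Commute.refl _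
      | exact absurd huu' (Γ.loopless _) | exact absurd huu' hvw | exact absurd huu'.symm hvw

variable {Γ}

lemma liftPair_gen_left {v w : V} (hvw : ¬ Γ.Adj v w) (g h : G) :
    liftPair Γ hvw g h (gen Γ v) = g := by
  simp [liftPair]

lemma liftPair_gen_right {v w : V} (hne : v ≠ w) (hvw : ¬ Γ.Adj v w) (g h : G) :
    liftPair Γ hvw g h (gen Γ w) = h := by
  simp [liftPair, hne.symm]

theorem not_commute_gen_zpow_mul {v w : V} (hne : v ≠ w) (hvw : ¬ Γ.Adj v w) {q r : ℤ}
    (hq : q ≠ 0) (hr : r ≠ 0) {c d : RAAG Γ} (hc : c ∈ commutator (RAAG Γ))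
    (hd : d ∈ commutator (RAAG Γ)) :
    ¬ Commute (gen Γ v ^ q * c) (gen Γ w ^ r * d) := by
  set φ := liftPair Γ hvw Heisenberg_s10.x Heisenberg_s10.y
  have hcentral {g : RAAG Γ} (hg : g ∈ commutator (RAAG Γ)) : φ g ∈ Subgroup.center _ :=
    φ.map_mem_center_of_mem_commutator Heisenberg_s10.commutator_le_center hg
  intro h
  apply Heisenberg_s10.not_commute_x_zpow_y_zpow hq hr
  have hφ := h.map φ
  rw [map_mul, map_mul, map_zpow, map_zpow, liftPair_gen_left, liftPair_gen_right hne] at hφ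
  exact hφ.of_mul_mem_center (hcentral hc) (hcentral hd)

theorem isClique_of_zpow_mem_sup_commutator (K : Subgroup (RAAG Γ))
    (hK : ∀ a ∈ K, ∀ b ∈ K, Commute a b) :
    Γ.IsClique {v : V | ∃ q : ℤ, q ≠ 0 ∧ gen Γ v ^ q ∈ K ⊔ commutator (RAAG Γ)} := by
  rintro v ⟨q, hq, hv⟩ w ⟨r, hr, hw⟩ hne
  by_contra hvw
  obtain ⟨k, hk, c, hc, hkc⟩ := Subgroup.mem_sup_of_normal_right.mp hv
  obtain ⟨k', hk', d, hd, hkd⟩ := Subgroup.mem_sup_of_normal_right.mp hw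
  have hkk' := hK k hk k' hk'
  rw [eq_mul_inv_of_mul_eq hkc, eq_mul_inv_of_mul_eq hkd] at hkk'
  exact not_commute_gen_zpow_mul hne hvw hq hr (inv_mem hc) (inv_mem hd) hkk'

end RAAG

theorem stmt_10_general {V : Type*} (Γ : SimpleGraph V) :
    (∀ v w : V, v ≠ w → ¬ Γ.Adj v w → ∀ q r : ℤ, q ≠ 0 → r ≠ 0 →
      ∀ c d : RAAG Γ, c ∈ commutator (RAAG Γ) → d ∈ commutator (RAAG Γ) →
        ¬ Commute (RAAG.gen Γ v ^ q * c) (RAAG.gen Γ w ^ r * d)) ∧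
    (∀ K : Subgroup (RAAG Γ), (∀ a ∈ K, ∀ b ∈ K, Commute a b) →
      Γ.IsClique {v : V | ∃ q : ℤ, q ≠ 0 ∧ RAAG.gen Γ v ^ q ∈ K ⊔ commutator (RAAG Γ)}) :=
  ⟨fun _ _ hne hvw _ _ hq hr _ _ hc hd => RAAG.not_commute_gen_zpow_mul hne hvw hq hr hc hd,
    RAAG.isClique_of_zpow_mem_sup_commutator⟩

/-- In a RAAG `A_Γ` on a finite simplicial graph: (1) for distinct non-adjacent vertices
`v, w`, nonzero integers `q, r` and commutators `c, d ∈ [A_Γ,A_Γ]`, the elements `v^q c`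
and `w^r d` do not commute; and (2) consequently, for any abelian subgroup `K ≤ A_Γ`, the
vertices lying in the radical `√(K[A_Γ,A_Γ])` span a clique in `Γ`. -/
theorem stmt_10 {V : Type*} [Fintype V] (Γ : SimpleGraph V) :
    (∀ v w : V, v ≠ w → ¬ Γ.Adj v w → ∀ q r : ℤ, q ≠ 0 → r ≠ 0 →
      ∀ c d : RAAG Γ, c ∈ commutator (RAAG Γ) → d ∈ commutator (RAAG Γ) →
        ¬ Commute (RAAG.gen Γ v ^ q * c) (RAAG.gen Γ w ^ r * d)) ∧
    (∀ K : Subgroup (RAAG Γ), (∀ a ∈ K, ∀ b ∈ K, Commute a b) →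
      Γ.IsClique {v : V | ∃ q : ℤ, q ≠ 0 ∧ RAAG.gen Γ v ^ q ∈ K ⊔ commutator (RAAG Γ)}) :=
  stmt_10_general Γ
end

section
/- Let Γ be a finite simplicial graph such that: (1) no closed star of a vertex separates Γ, (2) there are no distinct vertices v ≠ w with lk(v) ⊆ st(w), and (3) Γ is connected. Then Γ has no separating cliques: for every clique K in Γ (including the empty clique), the induced subgraph on V(Γ) \ K is connected. -/
/-!
Let `K` be a clique containing a vertex `v`. Then `K ⊆ st(v)`, and the complement of `st(v)`
is connected by hypothesis. Every vertex `u ∈ st(v) \ K` differs from `v`, so `lk(u) ⊄ st(v)`: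
`u` has a neighbour outside `st(v)`, hence outside `K`. So every vertex of `Γ - K` is joined
inside `Γ - K` to the connected subgraph `Γ - st(v)`. The empty clique is handled by the
connectedness of `Γ`.
-/

/-- A set `S` of vertices separates `Γ` if the induced subgraph on its complement is
disconnected. -/
def Separates {V : Type*} (Γ : SimpleGraph V) (S : Set V) : Prop :=
  ¬ (Γ.induce Sᶜ).Preconnected

namespace SimpleGraph

variable {V : Type*} {G : SimpleGraph V}

lemma IsClique.subset_insert_neighborSet {K : Set V} (hK : G.IsClique K) {v : V} (hv : v ∈ K) :
    K ⊆ Insert.insert v (G.neighborSet v) := by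
  intro x hx
  rcases eq_or_ne x v with rfl | hxv
  · exact Set.mem_insert x _
  · exact Set.mem_insert_of_mem v (hK hv hx hxv.symm)

lemma Preconnected.induce_of_subset_of_forall_adj {s t : Set V} (hst : s ⊆ t)
    (hs : (G.induce s).Preconnected) (hadj : ∀ u ∈ t, u ∉ s → ∃ x ∈ s, G.Adj u x) :
    (G.induce t).Preconnected := by
  let f := induceHomOfLE G hst
  have reach_image : ∀ u : t, ∃ x : s, (G.induce t).Reachable u (f x) := by
    rintro ⟨u, hut⟩
    by_cases hus : u ∈ s
    · exact ⟨⟨u, hus⟩, .rfl⟩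
    · obtain ⟨x, hxs, hux⟩ := hadj u hut hus
      exact ⟨⟨x, hxs⟩, (show (G.induce t).Adj ⟨u, hut⟩ ⟨x, hst hxs⟩ from hux).reachable⟩
  intro a b
  obtain ⟨xa, hxa⟩ := reach_image a
  obtain ⟨xb, hxb⟩ := reach_image b
  exact hxa.trans (((hs xa xb).map f.toHom).trans hxb.symm)

end SimpleGraph

theorem stmt_11_general {V : Type*} (Γ : SimpleGraph V)
    (hstar : ∀ v : V, ¬ Separates Γ (insert v (Γ.neighborSet v)))
    (hlk : ∀ v w : V, v ≠ w → ¬ (Γ.neighborSet v ⊆ insert w (Γ.neighborSet w)))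
    (hconn : Γ.Connected) :
    ∀ K : Set V, Γ.IsClique K → ¬ Separates Γ K := by
  intro K hK
  unfold Separates
  rw [not_not]
  rcases K.eq_empty_or_nonempty with rfl | ⟨v, hv⟩
  · exact hconn.preconnected.induce_of_degree_eq_one (by simp)
  have hKst := hK.subset_insert_neighborSet hv
  refine (not_not.mp (hstar v)).induce_of_subset_of_forall_adj
    (Set.compl_subset_compl.mpr hKst) fun u huK _ => ?_
  have huv : u ≠ v := by rintro rfl; exact huK hv
  obtain ⟨x, hux, hxst⟩ := Set.not_subset.mp (hlk u v huv)
  exact ⟨x, hxst, hux⟩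

/-- Let `Γ` be a finite connected simplicial graph in which no closed star of a vertex
separates `Γ` and there are no distinct vertices `v ≠ w` with `lk(v) ⊆ st(w)`. Then `Γ`
has no separating cliques. -/
theorem stmt_11 {V : Type*} [Fintype V] (Γ : SimpleGraph V)
    (hstar : ∀ v : V, ¬ Separates Γ (insert v (Γ.neighborSet v)))
    (hlk : ∀ v w : V, v ≠ w → ¬ (Γ.neighborSet v ⊆ insert w (Γ.neighborSet w)))
    (hconn : Γ.Connected) :
    ∀ K : Set V, Γ.IsClique K → ¬ Separates Γ K :=
  stmt_11_general Γ hstar hlk hconn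
end

section
/- Let Γ be a finite simplicial graph that is not a complete graph, and suppose no clique of Γ with at most n vertices separates Γ. Let χ : A_Γ → ℝ be a homomorphism such that the set of vertices v with χ(v) = 0 spans a clique with at most n vertices. Then the living subgraph of χ (the induced subgraph on vertices v with χ(v) ≠ 0) is connected and dominating in Γ. -/
/-!
The living subgraph is the complement of the dead clique, so its connectedness is exactly the
non-separation hypothesis. If a vertex `v` had only dead neighbours, its link would be a clique
with at most `n` vertices; since `Γ` is not complete, `v` has a non-neighbour `u ≠ v`, and removing
the link leaves `v` isolated from `u`, so the link separates `Γ`.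
-/

namespace SimpleGraph

variable {V : Type*} {G : SimpleGraph V}

theorem not_preconnected_induce_compl_neighborSet {u v : V} (huv : u ≠ v) (hvu : ¬ G.Adj v u) :
    ¬ (G.induce (G.neighborSet v)ᶜ).Preconnected := by
  intro hpre
  obtain ⟨p⟩ := hpre ⟨v, G.irrefl⟩ ⟨u, hvu⟩
  cases p with
  | nil => exact huv rfl
  | @cons _ w _ hadj _ => exact w.2 hadj

theorem exists_ne_not_adj_of_isClique_neighborSet (hnc : ∃ a b : V, a ≠ b ∧ ¬ G.Adj a b)
    {v : V} (hlink : G.IsClique (G.neighborSet v)) : ∃ u, u ≠ v ∧ ¬ G.Adj v u := by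
  obtain ⟨a, b, hab, hnadj⟩ := hnc
  by_contra! hstar
  apply hnadj
  by_cases ha : a = v
  · exact ha ▸ hstar b (ha ▸ hab.symm)
  by_cases hb : b = v
  · exact hb ▸ (hstar a ha).symm
  exact hlink (hstar a ha) (hstar b hb) hab

variable {D : Set V}

theorem connected_induce_compl_of_isClique (hnc : ∃ a b : V, a ≠ b ∧ ¬ G.Adj a b)
    (hD : G.IsClique D) (hpre : (G.induce Dᶜ).Preconnected) : (G.induce Dᶜ).Connected := by
  obtain ⟨a, b, hab, hnadj⟩ := hnc
  have hlive : ∃ x, x ∉ D := by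
    by_contra! hdead
    exact hnadj (hD (hdead a) (hdead b) hab)
  obtain ⟨x, hx⟩ := hlive
  have : Nonempty (Dᶜ : Set V) := ⟨⟨x, hx⟩⟩
  exact ⟨hpre⟩

theorem exists_adj_notMem_of_isClique [Finite V] {n : ℕ} (hnc : ∃ a b : V, a ≠ b ∧ ¬ G.Adj a b)
    (hsep : ∀ K : Set V, G.IsClique K → K.ncard ≤ n → (G.induce Kᶜ).Preconnected)
    (hD : G.IsClique D) (hDn : D.ncard ≤ n) (v : V) : ∃ w ∉ D, G.Adj v w := by
  by_contra! hdead
  have hlinkD : G.neighborSet v ⊆ D := fun w hw => by_contra fun hwD => hdead w hwD hw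
  have hlink : G.IsClique (G.neighborSet v) := hD.subset hlinkD
  obtain ⟨u, huv, hvu⟩ := exists_ne_not_adj_of_isClique_neighborSet hnc hlink
  exact not_preconnected_induce_compl_neighborSet huv hvu
    (hsep _ hlink ((Set.ncard_le_ncard hlinkD).trans hDn))

end SimpleGraph

open SimpleGraph in
/-- Let `Γ` be a finite non-complete simplicial graph in which no clique with at most `n`
vertices separates `Γ`, and let `χ : A_Γ → ℝ` be a character whose dead vertex set (the
vertices killed by `χ`) spans a clique with at most `n` vertices. Then the living
subgraph of `χ` is connected and dominating in `Γ`. -/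
theorem stmt_12 {V : Type*} [Fintype V] (Γ : SimpleGraph V)
    (hnc : ∃ v w : V, v ≠ w ∧ ¬ Γ.Adj v w) (n : ℕ)
    (hsep : ∀ K : Set V, Γ.IsClique K → K.ncard ≤ n → (Γ.induce Kᶜ).Preconnected)
    (χ : RAAG Γ →* Multiplicative ℝ)
    (hclique : Γ.IsClique {v : V | χ (RAAG.gen Γ v) = 1})
    (hcard : {v : V | χ (RAAG.gen Γ v) = 1}.ncard ≤ n) :
    (Γ.induce {v : V | χ (RAAG.gen Γ v) ≠ 1}).Connected ∧
      ∀ v : V, χ (RAAG.gen Γ v) = 1 →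
        ∃ w : V, χ (RAAG.gen Γ w) ≠ 1 ∧ Γ.Adj v w :=
  ⟨connected_induce_compl_of_isClique hnc hclique (hsep _ hclique hcard),
    fun v _ => exists_adj_notMem_of_isClique hnc hsep hclique hcard v⟩
end
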